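/- Define convolved Pell numbers by P_N^{(0)} = P_N and P_N^{(s)} = ∑_{j=0}^{N-1} P_{j+1} · P_{N-j}^{(s-1)} for s ≥ 1. Then for all N ≥ 1 and s ≥ 0, P_N^{(s)} = ((-i)^(N-1) / (2^s · s!)) · U_{N+s-1}^{(s)}(i). -/

import Mathlib

/-!
Splitting off the first term of the convolution and using `P_{j+2} = 2 P_{j+1} + P_j` gives
`P_{N+2}^{(s+1)} = 2 P_{N+1}^{(s+1)} + P_N^{(s+1)} + P_{N+2}^{(s)}`, while differentiating
`U_{n+2} = 2X U_{n+1} - U_n` gives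
`U_{n+2}^{(s+1)} = 2X U_{n+1}^{(s+1)} + 2(s+1) U_{n+1}^{(s)} - U_n^{(s+1)}`.
Multiplying by `i^N` turns `x_{N+2} = 2 x_{N+1} + x_N` into `x_{N+2} = 2i x_{N+1} - x_N`, and
`2^{s+1} (s+1)! = 2(s+1) · 2^s s!`, so `2^s s! i^N P_N^{(s)}` and `i U_{N+s-1}^{(s)}(i)` obey the
same recurrence. The initial values agree because `U_{s-1}^{(s)} = 0` and `U_s^{(s)} = 2^s s!`,
the leading coefficient of `U_s` being `2^s`.
-/

/-- The Pell numbers: `P_0 = 0`, `P_1 = 1`, `P_{n+2} = 2 P_{n+1} + P_n`. -/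
def pell : ℕ → ℕ
  | 0 => 0
  | 1 => 1
  | n + 2 => 2 * pell (n + 1) + pell n

/-- Convolved Pell numbers: `pellConv 0 N = P_N`,
`pellConv s N = ∑_{j=0}^{N-1} P_{j+1} · pellConv (s-1) (N-j)`. -/
def pellConv : ℕ → ℕ → ℕ
  | 0, N => pell N
  | s + 1, N => ∑ j ∈ Finset.range N, pell (j + 1) * pellConv s (N - j)

open Finset Polynomial Complex
open Polynomial.Chebyshev (U U_add_two U_neg_one natDegree_U_natCast leadingCoeff_U_natCast)

theorem pellConv_zero_right : ∀ s, pellConv s 0 = 0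
  | 0 => rfl
  | _ + 1 => rfl

theorem pellConv_one_right : ∀ s, pellConv s 1 = 1
  | 0 => rfl
  | s + 1 => by simp [pellConv, pellConv_one_right s, pell]

theorem pellConv_succ_add_two (s N : ℕ) :
    pellConv (s + 1) (N + 2) =
      2 * pellConv (s + 1) (N + 1) + pellConv (s + 1) N + pellConv s (N + 2) := by
  simp only [pellConv]
  rw [sum_range_succ' _ (N + 1)]
  simp only [pell, add_mul, sum_add_distrib, mul_assoc, ← mul_sum]
  rw [sum_range_succ' (fun j => pell j * _) N]
  simp [pell]

section CommRing

variable {R : Type*} [CommRing R]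

theorem iterate_derivative_eq_C_of_natDegree_le {p : R[X]} {n : ℕ} (hp : p.natDegree ≤ n) :
    derivative^[n] p = C (n.factorial • p.coeff n) := by
  rw [eq_C_of_natDegree_le_zero ((natDegree_iterate_derivative p n).trans (by omega)),
    coeff_iterate_derivative, zero_add, Nat.descFactorial_self]

theorem iterate_derivative_U_add_two (k : ℕ) (n : ℤ) :
    derivative^[k + 1] (U R (n + 2)) =
      2 * X * derivative^[k + 1] (U R (n + 1)) +
        (2 * (k + 1) : R[X]) * derivative^[k] (U R (n + 1)) - derivative^[k + 1] (U R n) := by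
  rw [U_add_two, iterate_derivative_sub,
    show 2 * X * U R (n + 1) = (((2 : ℕ) : R[X]) * U R (n + 1)) * X by push_cast; ring,
    iterate_derivative_mul_X, iterate_derivative_natCast_mul, iterate_derivative_natCast_mul,
    nsmul_eq_mul]
  push_cast
  ring

end CommRing

section Domain

variable (R : Type*) [CommRing R] [IsDomain R] [NeZero (2 : R)]

theorem iterate_derivative_U_self (n : ℕ) :
    derivative^[n] (U R n) = C (2 ^ n * n.factorial : R) := by
  conv_rhs => rw [← leadingCoeff_U_natCast R n]
  rw [iterate_derivative_eq_C_of_natDegree_le (natDegree_U_natCast R n).le, leadingCoeff,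
    natDegree_U_natCast, nsmul_eq_mul, mul_comm]

theorem iterate_derivative_U_sub_one (n : ℕ) : derivative^[n] (U R (n - 1)) = 0 := by
  rcases n with _ | n
  · simp [U_neg_one]
  · push_cast
    simp only [add_sub_cancel_right]
    exact iterate_derivative_eq_zero ((natDegree_U_natCast R n).trans_lt n.lt_succ_self)

end Domain

-- The factor `I` on the right replaces `(-I) ^ (N - 1)`, so the identity also holds at `N = 0`
-- (both sides vanish) and the induction on `N` can start there.
theorem scaled_pellConv_eq_eval_iterate_derivative_U :
    ∀ s N : ℕ, (2 ^ s * s.factorial : ℂ) * I ^ N * pellConv s N =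
      I * (derivative^[s] (U ℂ (N + s - 1))).eval I
  | s, 0 => by
    simp [pellConv_zero_right, iterate_derivative_U_sub_one]
  | s, 1 => by
    rw [pellConv_one_right, Nat.cast_one, Nat.cast_one, add_sub_cancel_left,
      iterate_derivative_U_self, eval_C]
    ring
  | 0, N + 2 => by
    have h1 := scaled_pellConv_eq_eval_iterate_derivative_U 0 (N + 1)
    have h0 := scaled_pellConv_eq_eval_iterate_derivative_U 0 N
    rw [show (↑(N + 1) + ↑(0 : ℕ) - 1 : ℤ) = N - 1 + 1 by push_cast; ring] at h1
    rw [show (↑N + ↑(0 : ℕ) - 1 : ℤ) = N - 1 by push_cast; ring] at h0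
    rw [show (↑(N + 2) + ↑(0 : ℕ) - 1 : ℤ) = N - 1 + 2 by push_cast; ring, U_add_two]
    simp only [pellConv, pell, Function.iterate_zero, id_eq, eval_sub, eval_mul, eval_ofNat,
      eval_X] at h1 h0 ⊢
    push_cast at h1 h0 ⊢
    linear_combination (2 * I) * h1 - h0 + I ^ N * pell N * I_sq
  | s + 1, N + 2 => by
    have h1 := scaled_pellConv_eq_eval_iterate_derivative_U (s + 1) (N + 1)
    have h0 := scaled_pellConv_eq_eval_iterate_derivative_U (s + 1) N
    have hs := scaled_pellConv_eq_eval_iterate_derivative_U s (N + 2)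
    rw [show (↑(N + 1) + ↑(s + 1) - 1 : ℤ) = N + s + 1 by push_cast; ring] at h1
    rw [show (↑N + ↑(s + 1) - 1 : ℤ) = N + s by push_cast; ring] at h0
    rw [show (↑(N + 2) + ↑s - 1 : ℤ) = N + s + 1 by push_cast; ring] at hs
    rw [show (↑(N + 2) + ↑(s + 1) - 1 : ℤ) = N + s + 2 by push_cast; ring,
      iterate_derivative_U_add_two, pellConv_succ_add_two, Nat.factorial_succ]
    rw [Nat.factorial_succ] at h1 h0
    simp only [eval_sub, eval_add, eval_mul, eval_ofNat, eval_X, eval_natCast, eval_one]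
    push_cast at h1 h0 hs ⊢
    linear_combination (2 * I) * h1 - h0 + 2 * (s + 1) * hs
      + 2 ^ (s + 1) * (s + 1) * s.factorial * I ^ N * pellConv (s + 1) N * I_sq

theorem stmt12 (N s : ℕ) (hN : 1 ≤ N) :
    (pellConv s N : ℂ) =
      (-Complex.I) ^ (N - 1) / (2 ^ s * s.factorial) *
        (Polynomial.derivative^[s] (Polynomial.Chebyshev.U ℂ (N + s - 1))).eval Complex.I := by
  obtain ⟨M, rfl⟩ := Nat.exists_eq_add_of_le' hN
  set E := (derivative^[s] (U ℂ ((M + 1 : ℕ) + s - 1))).eval I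
  have key : (2 ^ s * s.factorial : ℂ) * I ^ M * pellConv s (M + 1) = E := by
    apply mul_left_cancel₀ I_ne_zero
    rw [← scaled_pellConv_eq_eval_iterate_derivative_U]
    ring
  have hI : (-I) ^ M * I ^ M = 1 := by rw [← mul_pow]; simp
  have hc : (2 ^ s * s.factorial : ℂ) ≠ 0 := by simp [Nat.factorial_ne_zero]
  rw [Nat.add_sub_cancel, div_mul_eq_mul_div, eq_div_iff hc, ← key]
  linear_combination -(2 ^ s * s.factorial * pellConv s (M + 1) : ℂ) * hI
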